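/- Assume that every f_k (0 ≤ k ≤ m) is convex on ℝ^n (equivalently, the upper-left n×n block of each B_k is positive semidefinite) and all relations are ≤. If ū ∈ ℝ^n is an optimal solution of QCQP(δ), then the rank-one lift X̄ = (ū,1)(ū,1)^T = [[ū ū^T, ū],[ū^T, 1]] ∈ S^{n+1}_+ is an optimal solution of SDPR(δ). -/

import Mathlib

open Matrix BigOperators

noncomputable section

/-- Trace inner product `⟨A,X⟩ = Σᵢⱼ Aᵢⱼ Xᵢⱼ`. -/
def mInner {N : ℕ} (A X : Matrix (Fin N) (Fin N) ℝ) : ℝ :=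
  ∑ i, ∑ j, A i j * X i j

/-- The quadratic function `u ↦ (u,1)ᵀ B (u,1)` on `ℝⁿ`. -/
def quadF {n : ℕ} (B : Matrix (Fin (n + 1)) (Fin (n + 1)) ℝ) (u : Fin n → ℝ) : ℝ :=
  Fin.snoc u 1 ⬝ᵥ (B *ᵥ Fin.snoc u 1)

/-- A relation on `ℝ` is standard if it is `≤`, `=`, or `≥`. -/
def IsStdRel (r : ℝ → ℝ → Prop) : Prop :=
  r = (· ≤ ·) ∨ r = (· = ·) ∨ r = (· ≥ ·)

/-- The rank-one lift `(u,1)(u,1)ᵀ` of a vector `u ∈ ℝⁿ`. -/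
def liftMat {n : ℕ} (u : Fin n → ℝ) : Matrix (Fin (n + 1)) (Fin (n + 1)) ℝ :=
  vecMulVec (Fin.snoc u 1) (Fin.snoc u 1)

section Single

variable (nn m : ℕ) (B : Fin (m + 1) → Matrix (Fin (nn + 1)) (Fin (nn + 1)) ℝ)

/-- Feasibility of `u` for QCQP(δ) (all relations `≤`). -/
def qcqpFeas (δ : Fin m → ℝ) (u : Fin nn → ℝ) : Prop :=
  ∀ k : Fin m, quadF (B k.succ) u ≤ δ k

/-- The optimal value `ζ(δ)` of QCQP(δ). -/
def qcqpVal (δ : Fin m → ℝ) : EReal :=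
  sInf {y : EReal | ∃ u : Fin nn → ℝ,
    qcqpFeas nn m B δ u ∧ y = ((quadF (B 0) u : ℝ) : EReal)}

/-- Feasibility of `X` for the Shor relaxation SDPR(δ). -/
def sdprFeas (δ : Fin m → ℝ) (X : Matrix (Fin (nn + 1)) (Fin (nn + 1)) ℝ) : Prop :=
  X.PosSemidef ∧ X (Fin.last nn) (Fin.last nn) = 1 ∧
    ∀ k : Fin m, mInner (B k.succ) X ≤ δ k

/-- The optimal value `η(δ)` of SDPR(δ). -/
def sdprVal (δ : Fin m → ℝ) : EReal :=
  sInf {y : EReal | ∃ X : Matrix (Fin (nn + 1)) (Fin (nn + 1)) ℝ,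
    sdprFeas nn m B δ X ∧ y = ((mInner (B 0) X : ℝ) : EReal)}

end Single

/-!
A feasible `X` of SDPR(δ) with `X_{n+1,n+1} = 1` is projected to the vector `u` formed by the first
`n` entries of its last column. Since `X - (u,1)(u,1)ᵀ` vanishes on the last row and column,
`⟨B_k, X⟩ - f_k(u) = ⟨A_k, X₁₁ - u uᵀ⟩`, where `A_k` is the upper-left block of `B_k`. The Schur
complement `X₁₁ - u uᵀ` is positive semidefinite, and so is `A_k` by convexity; hence
`f_k(u) ≤ ⟨B_k, X⟩` for every `k`. So `u` is feasible for QCQP(δ), and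
`f_0(ū) ≤ f_0(u) ≤ ⟨B_0, X⟩`, while the lift of `ū` is feasible for SDPR(δ) with value `f_0(ū)`.
-/

section mInner

variable {N : ℕ}

lemma mInner_sub_right (A X Y : Matrix (Fin N) (Fin N) ℝ) :
    mInner A (X - Y) = mInner A X - mInner A Y := by
  simp [mInner, mul_sub]

lemma mInner_vecMulVec_self (B : Matrix (Fin N) (Fin N) ℝ) (v : Fin N → ℝ) :
    mInner B (vecMulVec v v) = v ⬝ᵥ (B *ᵥ v) := by
  simp only [mInner, vecMulVec_apply, dotProduct, mulVec, Finset.mul_sum]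
  exact Finset.sum_congr rfl fun i _ => Finset.sum_congr rfl fun j _ => by ring

-- `⟨A, M⟩` is the quadratic form of the Hadamard product `A ⊙ M` at the all-ones vector.
lemma mInner_nonneg {A M : Matrix (Fin N) (Fin N) ℝ} (hA : A.PosSemidef) (hM : M.PosSemidef) :
    0 ≤ mInner A M := by
  have h := (hA.hadamard hM).dotProduct_mulVec_nonneg (fun _ => 1)
  simpa [mInner, dotProduct, mulVec, hadamard] using h

end mInner

section lift

variable {n : ℕ}

lemma mInner_liftMat (B : Matrix (Fin (n + 1)) (Fin (n + 1)) ℝ) (u : Fin n → ℝ) :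
    mInner B (liftMat u) = quadF B u :=
  mInner_vecMulVec_self B _

lemma liftMat_posSemidef (u : Fin n → ℝ) : (liftMat u).PosSemidef :=
  posSemidef_vecMulVec_self_star (Fin.snoc u 1 : Fin (n + 1) → ℝ)

lemma liftMat_last_last (u : Fin n → ℝ) : liftMat u (Fin.last n) (Fin.last n) = 1 := by
  simp [liftMat, vecMulVec_apply]

-- Left inverse of `liftMat`.
def lastColumnInit (X : Matrix (Fin (n + 1)) (Fin (n + 1)) ℝ) : Fin n → ℝ :=
  fun i => X i.castSucc (Fin.last n)

lemma mInner_eq_mInner_submatrix_of_last_eq_zero (B D : Matrix (Fin (n + 1)) (Fin (n + 1)) ℝ)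
    (hcol : ∀ i, D i (Fin.last n) = 0) (hrow : ∀ j, D (Fin.last n) j = 0) :
    mInner B D = mInner (B.submatrix Fin.castSucc Fin.castSucc)
      (D.submatrix Fin.castSucc Fin.castSucc) := by
  simp [mInner, Fin.sum_univ_castSucc, hcol, hrow]

lemma mInner_sub_quadF_lastColumnInit (B X : Matrix (Fin (n + 1)) (Fin (n + 1)) ℝ)
    (hX : X.IsSymm) (hX1 : X (Fin.last n) (Fin.last n) = 1) :
    mInner B X - quadF B (lastColumnInit X) =
      mInner (B.submatrix Fin.castSucc Fin.castSucc)
        (X.submatrix Fin.castSucc Fin.castSucc -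
          vecMulVec (lastColumnInit X) (lastColumnInit X)) := by
  set u := lastColumnInit X
  have hcol : ∀ i, (X - liftMat u) i (Fin.last n) = 0 := by
    refine Fin.lastCases ?_ fun i => ?_ <;> simp [hX1, u, lastColumnInit, liftMat, vecMulVec_apply]
  have hrow : ∀ j, (X - liftMat u) (Fin.last n) j = 0 := fun j => by
    rw [← hcol j, ← transpose_apply (X - liftMat u), transpose_sub, hX.eq, liftMat,
      transpose_vecMulVec]
  have hsub : (liftMat u).submatrix Fin.castSucc Fin.castSucc = vecMulVec u u := by
    ext i j
    simp [liftMat, vecMulVec_apply]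
  rw [← mInner_liftMat, ← mInner_sub_right,
    mInner_eq_mInner_submatrix_of_last_eq_zero B _ hcol hrow, ← hsub]
  rfl

-- The Schur complement of the unit corner, written as the congruence `L X Lᵀ` with `L = [I | -u]`.
lemma Matrix.PosSemidef.submatrix_sub_vecMulVec_lastColumnInit
    {X : Matrix (Fin (n + 1)) (Fin (n + 1)) ℝ} (hX : X.PosSemidef)
    (hX1 : X (Fin.last n) (Fin.last n) = 1) :
    (X.submatrix Fin.castSucc Fin.castSucc -
      vecMulVec (lastColumnInit X) (lastColumnInit X)).PosSemidef := by
  set u := lastColumnInit X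
  let L : Matrix (Fin n) (Fin (n + 1)) ℝ := of fun i => Fin.snoc (Pi.single i 1) (-u i)
  have hsymm : ∀ j, X (Fin.last n) j = X j (Fin.last n) :=
    fun j => (isHermitian_iff_isSymm.mp hX.isHermitian).apply j _
  have hcongr : L * X * Lᴴ = X.submatrix Fin.castSucc Fin.castSucc - vecMulVec u u := by
    ext i j
    simp [L, mul_apply, Fin.sum_univ_castSucc, Pi.single_apply, u, lastColumnInit, hX1, hsymm,
      vecMulVec_apply]
    ring
  exact hcongr ▸ hX.mul_mul_conjTranspose_same L

lemma quadF_lastColumnInit_le_mInner {B X : Matrix (Fin (n + 1)) (Fin (n + 1)) ℝ}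
    (hB : (B.submatrix Fin.castSucc Fin.castSucc).PosSemidef) (hX : X.PosSemidef)
    (hX1 : X (Fin.last n) (Fin.last n) = 1) :
    quadF B (lastColumnInit X) ≤ mInner B X := by
  have hgap := mInner_sub_quadF_lastColumnInit B X (isHermitian_iff_isSymm.mp hX.isHermitian) hX1
  have := mInner_nonneg hB (hX.submatrix_sub_vecMulVec_lastColumnInit hX1)
  linarith

end lift

section relaxation

variable {n m : ℕ} {B : Fin (m + 1) → Matrix (Fin (n + 1)) (Fin (n + 1)) ℝ} {δ : Fin m → ℝ}

lemma sdprFeas_liftMat {u : Fin n → ℝ} (hu : qcqpFeas n m B δ u) :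
    sdprFeas n m B δ (liftMat u) :=
  ⟨liftMat_posSemidef u, liftMat_last_last u, fun k => (mInner_liftMat _ u).trans_le (hu k)⟩

lemma qcqpFeas_lastColumnInit (hconv : ∀ k, ((B k).submatrix Fin.castSucc Fin.castSucc).PosSemidef)
    {X : Matrix (Fin (n + 1)) (Fin (n + 1)) ℝ} (hX : sdprFeas n m B δ X) :
    qcqpFeas n m B δ (lastColumnInit X) := fun k =>
  (quadF_lastColumnInit_le_mInner (hconv _) hX.1 hX.2.1).trans (hX.2.2 k)

end relaxation

theorem convex_qcqp_opt_to_sdpr_opt_general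
    (nn m : ℕ)
    (B : Fin (m + 1) → Matrix (Fin (nn + 1)) (Fin (nn + 1)) ℝ)
    (hconv : ∀ k, ((B k).submatrix Fin.castSucc Fin.castSucc).PosSemidef)
    (δ : Fin m → ℝ)
    (ub : Fin nn → ℝ)
    (hfeas : qcqpFeas nn m B δ ub)
    (hopt : ((quadF (B 0) ub : ℝ) : EReal) = qcqpVal nn m B δ) :
    sdprFeas nn m B δ (liftMat ub) ∧
    ((mInner (B 0) (liftMat ub) : ℝ) : EReal) = sdprVal nn m B δ := by
  have hlift := sdprFeas_liftMat hfeas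
  refine ⟨hlift, le_antisymm (le_sInf ?_) (sInf_le ⟨liftMat ub, hlift, rfl⟩)⟩
  rintro _ ⟨X, hX, rfl⟩
  calc ((mInner (B 0) (liftMat ub) : ℝ) : EReal) = qcqpVal nn m B δ := by
        rw [mInner_liftMat, hopt]
    _ ≤ ((quadF (B 0) (lastColumnInit X) : ℝ) : EReal) :=
        sInf_le ⟨_, qcqpFeas_lastColumnInit hconv hX, rfl⟩
    _ ≤ ((mInner (B 0) X : ℝ) : EReal) :=
        EReal.coe_le_coe_iff.mpr (quadF_lastColumnInit_le_mInner (hconv 0) hX.1 hX.2.1)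

/-- **Theorem 4.1 (ii).** For a convex QCQP (all `fₖ` convex, all relations `≤`), if
`ū` is an optimal solution of QCQP(δ), then the rank-one lift
`X̄ = (ū,1)(ū,1)ᵀ` is an optimal solution of SDPR(δ). -/
theorem convex_qcqp_opt_to_sdpr_opt
    (nn m : ℕ) (hnn : 0 < nn) (hm : 0 < m)
    (B : Fin (m + 1) → Matrix (Fin (nn + 1)) (Fin (nn + 1)) ℝ)
    (hBsymm : ∀ k, (B k).IsSymm)
    (hBcorner : ∀ k, B k (Fin.last nn) (Fin.last nn) = 0)
    (hconv : ∀ k, ((B k).submatrix Fin.castSucc Fin.castSucc).PosSemidef)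
    (δ : Fin m → ℝ)
    (ub : Fin nn → ℝ)
    (hfeas : qcqpFeas nn m B δ ub)
    (hopt : ((quadF (B 0) ub : ℝ) : EReal) = qcqpVal nn m B δ) :
    sdprFeas nn m B δ (liftMat ub) ∧
    ((mInner (B 0) (liftMat ub) : ℝ) : EReal) = sdprVal nn m B δ :=
  convex_qcqp_opt_to_sdpr_opt_general nn m B hconv δ ub hfeas hopt
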